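/- arXiv:1106.2647 — 5 statements merged into one kernel-verified Lean document; each statement's English description precedes it below -/
import Mathlib

section
/- Every instance over the signature S of axiom scheme C3 (Composition): ([X⃗←x⃗](W = w) ∧ [X⃗←x⃗](Y = y)) → [X⃗←x⃗; W←w](Y = y), and of axiom scheme C4 (Effectiveness): [X←x; W⃗←w⃗](X = x), is valid with respect to the class M_a(Φ_S) of acceptable counterfactual structures over Φ_S. -/
/-! ## Signatures -/

structure Signature where
  exo : Type
  endo : Type
  exoFin : Fintype exo
  endoFin : Fintype endo
  endoDec : DecidableEq endo
  exoRange : exo → Type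
  range : endo → Type
  exoRangeFin : ∀ u, Fintype (exoRange u)
  rangeFin : ∀ X, Fintype (range X)
  exoRangeNe : ∀ u, Nonempty (exoRange u)
  rangeNe : ∀ X, Nonempty (range X)

attribute [instance] Signature.exoFin Signature.endoFin Signature.endoDec
  Signature.exoRangeFin Signature.rangeFin Signature.exoRangeNe Signature.rangeNe

/-- A context: an assignment of values to the exogenous variables. -/
abbrev Signature.Ctx (S : Signature) : Type := ∀ u : S.exo, S.exoRange u

/-- An assignment of values to the endogenous variables. -/
abbrev Signature.Asgn (S : Signature) : Type := ∀ X : S.endo, S.range X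

/-- An intervention `Y⃗ ← y⃗`: a partial assignment of values to (distinct)
endogenous variables. -/
abbrev Signature.Intervention (S : Signature) : Type := ∀ X : S.endo, Option (S.range X)

/-- The primitive propositions Φ_S : propositions `X = x` for `X ∈ V`, `x ∈ R(X)`. -/
abbrev Signature.Atom (S : Signature) : Type := Σ X : S.endo, S.range X

/-! ## Counterfactual structures -/

/-- A counterfactual structure over the primitive propositions `Φ`:
a finite set of worlds, a valuation, and a ternary relation `R`,
where `R w u v` means `u ⪯_w v`. -/
structure CStruct (Φ : Type) where
  World : Type
  worldFin : Fintype World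
  val : World → Φ → Prop
  R : World → World → World → Prop
  self_mem : ∀ w, ∃ v, R w w v
  refl_on : ∀ w u, (∃ v, R w u v) → R w u u
  trans_on : ∀ w u v x, (∃ y, R w u y) → (∃ y, R w v y) → (∃ y, R w x y) →
    R w u v → R w v x → R w u x
  centered : ∀ w u, u ≠ w → (R w w u ∧ ¬ R w u w)

attribute [instance] CStruct.worldFin

namespace CStruct

variable {Φ : Type} (M : CStruct Φ)

/-- `u ∈ W_w` : `u ⪯_w v` for some `v`. -/
def inW (w u : M.World) : Prop := ∃ v, M.R w u v

/-- `u ≺_w v` : `u ⪯_w v` and not `v ⪯_w u`. -/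
def lt (w u v : M.World) : Prop := M.R w u v ∧ ¬ M.R w v u

/-- The set of worlds in `W_w` satisfying `A` that are closest to `w`. -/
def closest (w : M.World) (A : M.World → Prop) : Set M.World :=
  {v | M.inW w v ∧ A v ∧ ∀ v', A v' → ¬ M.lt w v' v}

/-- `(M,w) ⊨ A > B` : every closest world to `w` satisfying `A` satisfies `B`. -/
def cfSat (w : M.World) (A B : M.World → Prop) : Prop :=
  ∀ v ∈ M.closest w A, B v

/-- Membership in `M⁺`: each `≺_w` is a strict total order on `W_w`. -/
def totalOrd : Prop :=
  ∀ w u v, M.inW w u → M.inW w v → u ≠ v → M.lt w u v ∨ M.lt w v u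

end CStruct

/-! ## Acceptable and full structures over Φ_S -/

/-- At every world, for each variable `X` exactly one proposition `X = x` is true. -/
def Acceptable (S : Signature) (M : CStruct S.Atom) : Prop :=
  ∀ (w : M.World) (X : S.endo), ∃! x : S.range X, M.val w ⟨X, x⟩

/-- Every assignment of values to the endogenous variables is realized at some
world of `W_w`, for every world `w`. -/
def Full (S : Signature) (M : CStruct S.Atom) : Prop :=
  ∀ (w : M.World) (a : S.Asgn), ∃ v, M.inW w v ∧ ∀ X : S.endo, M.val v ⟨X, a X⟩

/-- The antecedent `Y⃗ = y⃗` (a conjunction of atoms) of the counterfactual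
corresponding to the intervention `g`, as a predicate on worlds. -/
def intAnte (S : Signature) (M : CStruct S.Atom) (g : S.Intervention) :
    M.World → Prop :=
  fun v => ∀ (Y : S.endo) (y : S.range Y), g Y = some y → M.val v ⟨Y, y⟩

/-- `(M,w) ⊨ [Y⃗ ← y⃗](X = x)`, read as the counterfactual
`(Y₁ = y₁ ∧ ... ∧ Y_k = y_k) > (X = x)`. -/
def satBasic (S : Signature) (M : CStruct S.Atom) (w : M.World)
    (g : S.Intervention) (X : S.endo) (x : S.range X) : Prop :=
  M.cfSat w (intAnte S M g) (fun v => M.val v ⟨X, x⟩)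

/-- Recursive counterfactual structures `Mrec(Φ_S)`: full acceptable structures in
`M⁺` such that for each world there is a strict total order `≺` on the endogenous
variables such that if `W' ≺ Y` then setting `Y` (in addition to `X⃗`) does not
change the value of `W'` at the closest world. -/
def MRec (S : Signature) (M : CStruct S.Atom) : Prop :=
  Acceptable S M ∧ Full S M ∧ M.totalOrd ∧
  ∀ w : M.World, ∃ vlt : S.endo → S.endo → Prop, IsStrictTotalOrder S.endo vlt ∧
    ∀ W' Y : S.endo, vlt W' Y →
      ∀ g : S.Intervention, g W' = none → g Y = none →
        ∀ (y : S.range Y) (w' : S.range W'),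
          (satBasic S M w (Function.update g Y (some y)) W' w' ↔ satBasic S M w g W' w')

/-! ## Causal models -/

/-- A causal model over `S`: for each endogenous variable `X`, a structural
equation `F_X` mapping the values of all the other variables to a value of `X`. -/
structure CausalModel (S : Signature) where
  F : ∀ X : S.endo, S.Ctx → (∀ Y : {Y : S.endo // Y ≠ X}, S.range Y.1) → S.range X

namespace CausalModel

variable {S : Signature}

/-- `a` is a solution of the equations of `T_{g}` in context `u`. -/
def isSolution (T : CausalModel S) (g : S.Intervention) (u : S.Ctx) (a : S.Asgn) : Prop :=
  ∀ X : S.endo,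
    (∀ x : S.range X, g X = some x → a X = x) ∧
    (g X = none → a X = T.F X u (fun Y => a Y.1))

/-- `T` is recursive (acyclic): membership in `Trec(S)`. -/
def Recursive (T : CausalModel S) : Prop :=
  ∃ vlt : S.endo → S.endo → Prop, IsStrictTotalOrder S.endo vlt ∧
    ∀ X Y : S.endo, vlt X Y →
      ∀ (u : S.Ctx) (a a' : ∀ Z : {Z : S.endo // Z ≠ X}, S.range Z.1),
        (∀ Z : {Z : S.endo // Z ≠ X}, Z.1 ≠ Y → a Z = a' Z) →
        T.F X u a = T.F X u a'

/-- Membership in `Tun(S)`: all the equations of every `T_{X⃗ ← x⃗}` have a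
unique solution in every context. -/
def UniqueSolutions (T : CausalModel S) : Prop :=
  ∀ (g : S.Intervention) (u : S.Ctx), ∃! a : S.Asgn, T.isSolution g u a

end CausalModel

/-! ## The language Lprop(S) -/

/-- `Lprop(S)`: Boolean combinations of basic formulas `[Y⃗ ← y⃗](X = x)`. -/
inductive LProp (S : Signature) : Type
  | basic (g : S.Intervention) (X : S.endo) (x : S.range X) : LProp S
  | neg : LProp S → LProp S
  | and : LProp S → LProp S → LProp S

/-- Satisfaction of `Lprop(S)` formulas in a causal model, relative to a context. -/
def CausalModel.sat {S : Signature} (T : CausalModel S) (u : S.Ctx) : LProp S → Prop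
  | .basic g X x => ∀ a : S.Asgn, T.isSolution g u a → a X = x
  | .neg φ => ¬ CausalModel.sat T u φ
  | .and φ ψ => CausalModel.sat T u φ ∧ CausalModel.sat T u ψ

/-- Satisfaction of `Lprop(S)` formulas in a counterfactual structure over `Φ_S`. -/
def satL {S : Signature} (M : CStruct S.Atom) (w : M.World) : LProp S → Prop
  | .basic g X x => satBasic S M w g X x
  | .neg φ => ¬ satL M w φ
  | .and φ ψ => satL M w φ ∧ satL M w ψ

namespace LProp

variable {S : Signature}

def imp (φ ψ : LProp S) : LProp S := .neg (.and φ (.neg ψ))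

def or (φ ψ : LProp S) : LProp S := .neg (.and (.neg φ) (.neg ψ))

/-- Boolean evaluation of a formula treating the basic formulas as atoms. -/
def evalB (v : LProp S → Prop) : LProp S → Prop
  | .neg φ => ¬ evalB v φ
  | .and φ ψ => evalB v φ ∧ evalB v ψ
  | .basic g X x => v (.basic g X x)

/-- Instances of propositional tautologies in `Lprop(S)`. -/
def Taut (φ : LProp S) : Prop := ∀ v : LProp S → Prop, evalB v φ

/-- Disjunction of a nonempty list of formulas. -/
def bigOrNe : LProp S → List (LProp S) → LProp S
  | φ, [] => φ
  | φ, ψ :: l => or φ (bigOrNe ψ l)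

end LProp

/-- The proof system AXun(S): C0 (propositional tautologies), C1 (equality),
C2 (definiteness), C3 (composition), C4 (effectiveness), C5 (reversibility),
with modus ponens. -/
inductive AXunProv (S : Signature) : LProp S → Prop
  | taut {φ : LProp S} : LProp.Taut φ → AXunProv S φ
  | c1 (g : S.Intervention) (X : S.endo) (x x' : S.range X) (h : x ≠ x') :
      AXunProv S (LProp.imp (.basic g X x) (.neg (.basic g X x')))
  | c2 (g : S.Intervention) (X : S.endo) (x0 : S.range X) (l : List (S.range X))
      (h : x0 :: l = (Finset.univ : Finset (S.range X)).toList) :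
      AXunProv S (LProp.bigOrNe (.basic g X x0) (l.map (fun x => LProp.basic g X x)))
  | c3 (g : S.Intervention) (W : S.endo) (w : S.range W) (Y : S.endo) (y : S.range Y)
      (hW : g W = none) :
      AXunProv S (LProp.imp (.and (.basic g W w) (.basic g Y y))
        (.basic (Function.update g W (some w)) Y y))
  | c4 (g : S.Intervention) (X : S.endo) (x : S.range X) (h : g X = some x) :
      AXunProv S (.basic g X x)
  | c5 (g : S.Intervention) (W : S.endo) (w : S.range W) (Y : S.endo) (y : S.range Y)
      (hne : Y ≠ W) (hW : g W = none) (hY : g Y = none) :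
      AXunProv S (LProp.imp
        (.and (.basic (Function.update g W (some w)) Y y)
              (.basic (Function.update g Y (some y)) W w))
        (.basic g Y y))
  | mp {φ ψ : LProp S} : AXunProv S (LProp.imp φ ψ) → AXunProv S φ → AXunProv S ψ

/-! ## The language Lex(S) -/

/-- Boolean combinations of atoms `X = x`. -/
inductive BForm (S : Signature) : Type
  | atom (X : S.endo) (x : S.range X) : BForm S
  | neg : BForm S → BForm S
  | and : BForm S → BForm S → BForm S

def BForm.holds {S : Signature} (a : S.Asgn) : BForm S → Prop
  | .atom X x => a X = x
  | .neg φ => ¬ BForm.holds a φ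
  | .and φ ψ => BForm.holds a φ ∧ BForm.holds a ψ

/-- `Lex(S)`: Boolean combinations of basic formulas `[Y⃗ ← y⃗]ψ`, where `ψ` is a
Boolean combination of atoms. -/
inductive LEx (S : Signature) : Type
  | basic (g : S.Intervention) (ψ : BForm S) : LEx S
  | neg : LEx S → LEx S
  | and : LEx S → LEx S → LEx S

/-- Satisfaction of `Lex(S)` formulas in a causal model, relative to a context. -/
def CausalModel.satEx {S : Signature} (T : CausalModel S) (u : S.Ctx) : LEx S → Prop
  | .basic g ψ => ∀ a : S.Asgn, T.isSolution g u a → ψ.holds a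
  | .neg φ => ¬ CausalModel.satEx T u φ
  | .and φ ψ => CausalModel.satEx T u φ ∧ CausalModel.satEx T u ψ

/-! ## The counterfactual language L^C(Φ) and the system AX -/

/-- The language `L^C(Φ)`: primitive propositions closed under `∧`, `¬` and the
counterfactual connective `>` (`cf`). -/
inductive CForm (Φ : Type) : Type
  | atom : Φ → CForm Φ
  | fls : CForm Φ
  | neg : CForm Φ → CForm Φ
  | and : CForm Φ → CForm Φ → CForm Φ
  | cf : CForm Φ → CForm Φ → CForm Φ

namespace CForm

variable {Φ : Type}

def tr : CForm Φ := neg fls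

def or (φ ψ : CForm Φ) : CForm Φ := neg (and (neg φ) (neg ψ))

def imp (φ ψ : CForm Φ) : CForm Φ := or (neg φ) ψ

def iff (φ ψ : CForm Φ) : CForm Φ := and (imp φ ψ) (imp ψ φ)

/-- Boolean evaluation treating atoms and counterfactuals as atomic. -/
def evalB (v : CForm Φ → Prop) : CForm Φ → Prop
  | fls => False
  | neg φ => ¬ evalB v φ
  | and φ ψ => evalB v φ ∧ evalB v ψ
  | atom p => v (atom p)
  | cf φ ψ => v (cf φ ψ)

/-- Instances of propositional tautologies in `L^C(Φ)`. -/
def Taut (φ : CForm Φ) : Prop := ∀ v : CForm Φ → Prop, evalB v φ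

def bigAnd : List (CForm Φ) → CForm Φ
  | [] => tr
  | [φ] => φ
  | φ :: l => and φ (bigAnd l)

def bigOr : List (CForm Φ) → CForm Φ
  | [] => fls
  | [φ] => φ
  | φ :: l => or φ (bigOr l)

end CForm

/-- Provability in the system AX (axioms A0–A6, rules MP, RA1, RA2), augmented
with an arbitrary set `extra` of additional axioms. -/
inductive AXProv (Φ : Type) (extra : CForm Φ → Prop) : CForm Φ → Prop
  | taut {φ} : CForm.Taut φ → AXProv Φ extra φ
  | ax {φ} : extra φ → AXProv Φ extra φ
  | a1 (φ) : AXProv Φ extra (CForm.cf φ φ)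
  | a2 (φ ψ1 ψ2) : AXProv Φ extra
      (CForm.imp (CForm.and (CForm.cf φ ψ1) (CForm.cf φ ψ2)) (CForm.cf φ (CForm.and ψ1 ψ2)))
  | a3 (φ1 φ2 ψ) : AXProv Φ extra
      (CForm.imp (CForm.and (CForm.cf φ1 φ2) (CForm.cf φ1 ψ)) (CForm.cf (CForm.and φ1 φ2) ψ))
  | a4 (φ1 φ2 ψ) : AXProv Φ extra
      (CForm.imp (CForm.and (CForm.cf φ1 ψ) (CForm.cf φ2 ψ)) (CForm.cf (CForm.or φ1 φ2) ψ))
  | a5 : AXProv Φ extra (CForm.neg (CForm.cf CForm.tr CForm.fls))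
  | a6 (φ ψ) : AXProv Φ extra (CForm.imp φ (CForm.iff ψ (CForm.cf φ ψ)))
  | mp {φ ψ} : AXProv Φ extra (CForm.imp φ ψ) → AXProv Φ extra φ → AXProv Φ extra ψ
  | ra1 {φ φ' ψ} : AXProv Φ extra (CForm.iff φ φ') →
      AXProv Φ extra (CForm.imp (CForm.cf φ ψ) (CForm.cf φ' ψ))
  | ra2 {ψ ψ' φ} : AXProv Φ extra (CForm.imp ψ ψ') →
      AXProv Φ extra (CForm.imp (CForm.cf φ ψ) (CForm.cf φ ψ'))

/-- The axiom scheme A7. -/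
def A7Scheme (Φ : Type) : CForm Φ → Prop := fun θ =>
  ∃ φ ψ1 ψ2 : CForm Φ, θ = CForm.imp (CForm.cf φ (CForm.or ψ1 ψ2))
    (CForm.or (CForm.cf φ ψ1) (CForm.cf φ ψ2))

/-- Satisfaction of `L^C(Φ)` formulas in a counterfactual structure. -/
def CStruct.satC {Φ : Type} (M : CStruct Φ) : M.World → CForm Φ → Prop
  | w, .atom p => M.val w p
  | _, .fls => False
  | w, .neg φ => ¬ CStruct.satC M w φ
  | w, .and φ ψ => CStruct.satC M w φ ∧ CStruct.satC M w ψ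
  | w, .cf φ ψ => ∀ v ∈ M.closest w (fun u => CStruct.satC M u φ), CStruct.satC M v ψ

/-! ## The signature with three binary endogenous variables -/

/-- The signature with endogenous variables `V = {X1, X2, X3}` (as `Fin 3`), each
with range `{0, 1}` (as `Fin 2`), and an arbitrary exogenous part. -/
abbrev S3 (E : Type) (eF : Fintype E) (er : E → Type)
    (erF : ∀ e, Fintype (er e)) (erN : ∀ e, Nonempty (er e)) : Signature :=
  { exo := E
    endo := Fin 3
    exoFin := eF
    endoFin := inferInstance
    endoDec := inferInstance
    exoRange := er
    range := fun _ => Fin 2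
    exoRangeFin := erF
    rangeFin := fun _ => inferInstance
    exoRangeNe := erN
    rangeNe := fun _ => ⟨0⟩ }

/-- The intervention `Xi ← 1`. -/
def gI {E : Type} {eF : Fintype E} {er : E → Type}
    {erF : ∀ e, Fintype (er e)} {erN : ∀ e, Nonempty (er e)}
    (i : Fin 3) : (S3 E eF er erF erN).Intervention :=
  fun j => if j = i then some (1 : Fin 2) else none

/-- The intervention `Xi ← 1; Xj ← 1`. -/
def gII {E : Type} {eF : Fintype E} {er : E → Type}
    {erF : ∀ e, Fintype (er e)} {erN : ∀ e, Nonempty (er e)}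
    (i j : Fin 3) : (S3 E eF er erF erN).Intervention :=
  fun k => if k = i ∨ k = j then some (1 : Fin 2) else none

/-- The formula φ : `[X1←1](X2 = 1) ∧ [X1←1](X3 = 0) ∧ [X2←1](X3 = 1) ∧
[X2←1](X1 = 0) ∧ [X3←1](X1 = 1) ∧ [X3←1](X2 = 0)`. -/
def phi3 {E : Type} {eF : Fintype E} {er : E → Type}
    {erF : ∀ e, Fintype (er e)} {erN : ∀ e, Nonempty (er e)} :
    LProp (S3 E eF er erF erN) :=
  .and (.basic (gI 0) 1 1) <| .and (.basic (gI 0) 2 0) <| .and (.basic (gI 1) 2 1) <|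
    .and (.basic (gI 1) 0 0) <| .and (.basic (gI 2) 0 1) (.basic (gI 2) 1 0)

/-!
Composition is an instance of cautious monotonicity, `(A > B) ∧ (A > C) → (A ∧ B > C)`, valid in
every counterfactual structure: if some `A`-world were strictly closer than a closest `A ∧ B`-world,
then by finiteness a closest `A`-world would be too, and that world satisfies `B`. Effectiveness
holds because closest worlds satisfy the antecedent.
-/

namespace CStruct

variable {Φ : Type} {M : CStruct Φ} {w : M.World} {A B C : M.World → Prop}

theorem lt_trans_of_inW {u v x : M.World} (hv : M.inW w v) (hx : M.inW w x)
    (huv : M.lt w u v) (hvx : M.lt w v x) : M.lt w u x :=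
  have hu : M.inW w u := ⟨v, huv.1⟩
  ⟨M.trans_on w u v x hu hv hx huv.1 hvx.1,
    fun hxu => hvx.2 (M.trans_on w x u v hx hu hv hxu huv.1)⟩

theorem exists_mem_closest_lt {v v' : M.World} (hv : M.inW w v) (hAv' : A v')
    (hlt : M.lt w v' v) : ∃ u ∈ M.closest w A, M.lt w u v := by
  -- `≺_w` is only transitive on `W_w`, so the relation also records membership of the larger world.
  let r : M.World → M.World → Prop := fun a b => M.lt w a b ∧ M.inW w b
  have : IsTrans M.World r :=
    ⟨fun a b c hab hbc => ⟨lt_trans_of_inW hab.2 hbc.2 hab.1 hbc.1, hbc.2⟩⟩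
  have : Std.Irrefl r := ⟨fun a ha => ha.1.2 ha.1.1⟩
  obtain ⟨m, ⟨hAm, hmv⟩, hmin⟩ :=
    (Finite.wellFounded_of_trans_of_irrefl r).has_min {u | A u ∧ M.lt w u v} ⟨v', hAv', hlt⟩
  have hm : M.inW w m := ⟨v, hmv.1⟩
  refine ⟨m, ⟨hm, hAm, fun u hAu hum => hmin u ⟨hAu, ?_⟩ ⟨hum, hm⟩⟩, hmv⟩
  exact lt_trans_of_inW hm hv hum hmv

theorem closest_and_subset (hB : M.cfSat w A B) :
    M.closest w (fun v => A v ∧ B v) ⊆ M.closest w A := by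
  rintro v ⟨hv, ⟨hAv, -⟩, hmin⟩
  refine ⟨hv, hAv, fun v' hAv' hlt => ?_⟩
  obtain ⟨u, hu, hlt'⟩ := exists_mem_closest_lt hv hAv' hlt
  exact hmin u ⟨hu.2.1, hB u hu⟩ hlt'

theorem cfSat_and_of_cfSat (hB : M.cfSat w A B) (hC : M.cfSat w A C) :
    M.cfSat w (fun v => A v ∧ B v) C :=
  fun v hv => hC v (closest_and_subset hB hv)

end CStruct

section Interventions

variable {S : Signature} {M : CStruct S.Atom} {g : S.Intervention}

theorem intAnte_update_of_eq_none {W : S.endo} (wv : S.range W) (hW : g W = none) :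
    intAnte S M (Function.update g W (some wv)) = fun v => intAnte S M g v ∧ M.val v ⟨W, wv⟩ := by
  funext v
  apply propext
  constructor
  · intro hv
    refine ⟨fun Z z hZ => hv Z z ?_, hv W wv (Function.update_self ..)⟩
    have hZW : Z ≠ W := by rintro rfl; simp [hW] at hZ
    rwa [Function.update_of_ne hZW]
  · rintro ⟨hv, hWv⟩ Z z hZ
    by_cases hZW : Z = W
    · subst hZW
      obtain rfl : wv = z := Option.some.inj (by rwa [Function.update_self] at hZ)
      exact hWv
    · exact hv Z z (by rwa [Function.update_of_ne hZW] at hZ)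

theorem satBasic_update_of_satBasic {w : M.World} {W Y : S.endo} {wv : S.range W}
    {y : S.range Y} (hW : g W = none) (hsW : satBasic S M w g W wv)
    (hsY : satBasic S M w g Y y) : satBasic S M w (Function.update g W (some wv)) Y y := by
  unfold satBasic
  rw [intAnte_update_of_eq_none wv hW]
  exact CStruct.cfSat_and_of_cfSat hsW hsY

theorem satBasic_of_eq_some (w : M.World) {X : S.endo} {x : S.range X} (hX : g X = some x) :
    satBasic S M w g X x :=
  fun _ hv => hv.2.1 X x hX

end Interventions

theorem stmt0_general (S : Signature) (M : CStruct S.Atom) :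
    (∀ (w : M.World) (g : S.Intervention) (W : S.endo) (wv : S.range W)
        (Y : S.endo) (y : S.range Y), g W = none →
        satBasic S M w g W wv → satBasic S M w g Y y →
        satBasic S M w (Function.update g W (some wv)) Y y) ∧
    (∀ (w : M.World) (g : S.Intervention) (X : S.endo) (x : S.range X),
        g X = some x → satBasic S M w g X x) :=
  ⟨fun _ _ _ _ _ _ hW hsW hsY => satBasic_update_of_satBasic hW hsW hsY,
    fun w _ _ _ hX => satBasic_of_eq_some w hX⟩

/-- Every instance of C3 (Composition) and of C4 (Effectiveness)
over the signature `S` is valid with respect to the class `M_a(Φ_S)` of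
acceptable counterfactual structures. -/
theorem stmt0 (S : Signature) (M : CStruct S.Atom) (hacc : Acceptable S M) :
    (∀ (w : M.World) (g : S.Intervention) (W : S.endo) (wv : S.range W)
        (Y : S.endo) (y : S.range Y), g W = none →
        satBasic S M w g W wv → satBasic S M w g Y y →
        satBasic S M w (Function.update g W (some wv)) Y y) ∧
    (∀ (w : M.World) (g : S.Intervention) (X : S.endo) (x : S.range X),
        g X = some x → satBasic S M w g X x) :=
  stmt0_general S M
end

section
/- Every instance over the signature S of axiom scheme C2 (Definiteness): ⋁_{x ∈ R(X)} [Y⃗←y⃗](X = x), is valid with respect to the class M_a^+(Φ_S) of acceptable counterfactual structures over Φ_S in which each ≺_w is a strict total order. -/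
/-! When each `≺_w` is a strict total order, there is at most one closest `A`-world.
If there is none, every `A > B` holds vacuously; otherwise `A > B` holds exactly when
`B` holds at that world, and in an acceptable structure that world makes some `X = x`
true. -/

namespace CStruct

variable {Φ : Type} {M : CStruct Φ}

theorem closest_subsingleton (htot : M.totalOrd) (w : M.World) (A : M.World → Prop) :
    (M.closest w A).Subsingleton := by
  intro u ⟨huW, huA, hu⟩ v ⟨hvW, hvA, hv⟩
  by_contra huv
  rcases htot w u v huW hvW huv with hlt | hlt
  · exact hv u huA hlt
  · exact hu v hvA hlt

theorem exists_cfSat_of_totalOrd {ι : Type*} [Nonempty ι] (htot : M.totalOrd)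
    (w : M.World) (A : M.World → Prop) (B : ι → M.World → Prop) (hB : ∀ v, ∃ i, B i v) :
    ∃ i, M.cfSat w A (B i) := by
  rcases (closest_subsingleton htot w A).eq_empty_or_singleton with hempty | ⟨v, hv⟩
  · exact ⟨Classical.arbitrary ι, fun v hvA => by simp [hempty] at hvA⟩
  · obtain ⟨i, hi⟩ := hB v
    exact ⟨i, fun u hu => by rw [hv, Set.mem_singleton_iff] at hu; exact hu ▸ hi⟩

end CStruct

/-- Every instance of C2 (Definiteness),
`⋁_{x ∈ R(X)} [Y⃗←y⃗](X = x)`, is valid with respect to `M_a⁺(Φ_S)`. -/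
theorem stmt1 (S : Signature) (M : CStruct S.Atom) (hacc : Acceptable S M)
    (htot : M.totalOrd) (w : M.World) (g : S.Intervention) (X : S.endo) :
    ∃ x : S.range X, satBasic S M w g X x :=
  CStruct.exists_cfSat_of_totalOrd htot w (intAnte S M g) (fun x v => M.val v ⟨X, x⟩)
    fun v => (hacc v X).exists
end

section
/- Every instance over the signature S of axiom scheme C1 (Equality): [Y⃗←y⃗](X = x) → ¬[Y⃗←y⃗](X = x') for x, x' ∈ R(X) with x ≠ x', is valid with respect to the class M_f(Φ_S) of full acceptable counterfactual structures over Φ_S. -/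
/-! Fullness puts a world realizing the antecedent `Y⃗ = y⃗` into `W_w`. Since there are finitely
many worlds and `≺_w` is a strict order on `W_w`, some such world is closest; both consequents
`X = x` and `X = x'` would hold there, which acceptability forbids. Without fullness the set of
closest worlds could be empty and both counterfactuals would hold vacuously. -/

namespace CStruct

variable {Φ : Type} (M : CStruct Φ)

theorem lt_trans_of_inW_s2 {w p q s : M.World} (hs : M.inW w s) (hpq : M.lt w p q)
    (hqs : M.lt w q s) : M.lt w p s :=
  have hp : M.inW w p := ⟨q, hpq.1⟩
  have hq : M.inW w q := ⟨s, hqs.1⟩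
  ⟨M.trans_on w p q s hp hq hs hpq.1 hqs.1,
    fun hsp => hqs.2 (M.trans_on w s p q hs hp hq hsp hpq.1)⟩

theorem wellFounded_lt_inW (w : M.World) :
    WellFounded (fun p q => M.lt w p q ∧ M.inW w q) := by
  let r : M.World → M.World → Prop := fun p q => M.lt w p q ∧ M.inW w q
  have : IsTrans M.World r :=
    ⟨fun _ _ _ ⟨hpq, _⟩ ⟨hqs, hs⟩ => ⟨M.lt_trans_of_inW_s2 hs hpq hqs, hs⟩⟩
  have : Std.Irrefl r := ⟨fun _ ⟨hlt, _⟩ => hlt.2 hlt.1⟩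
  exact Finite.wellFounded_of_trans_of_irrefl r

theorem closest_nonempty {w : M.World} {A : M.World → Prop} (h : ∃ v, M.inW w v ∧ A v) :
    (M.closest w A).Nonempty := by
  obtain ⟨m, ⟨hmW, hmA⟩, hmin⟩ := (M.wellFounded_lt_inW w).has_min {v | M.inW w v ∧ A v} h
  exact ⟨m, hmW, hmA, fun v' hv'A hlt => hmin v' ⟨⟨m, hlt.1⟩, hv'A⟩ ⟨hlt, hmW⟩⟩

end CStruct

section

variable {S : Signature} {M : CStruct S.Atom}

theorem Full.exists_inW_intAnte (hfull : Full S M) (w : M.World) (g : S.Intervention) :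
    ∃ v, M.inW w v ∧ intAnte S M g v := by
  obtain ⟨v, hvW, hv⟩ := hfull w fun Y => (g Y).getD (Classical.arbitrary _)
  refine ⟨v, hvW, fun Y y hgy => ?_⟩
  simpa [hgy] using hv Y

theorem Acceptable.eq_of_val (hacc : Acceptable S M) {m : M.World} {X : S.endo}
    {x x' : S.range X} (hx : M.val m ⟨X, x⟩) (hx' : M.val m ⟨X, x'⟩) : x = x' :=
  (hacc m X).unique hx hx'

end

/-- Every instance of C1 (Equality),
`[Y⃗←y⃗](X = x) → ¬[Y⃗←y⃗](X = x')` for `x ≠ x'`, is valid with respect to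
the class `M_f(Φ_S)` of full acceptable counterfactual structures. -/
theorem stmt2 (S : Signature) (M : CStruct S.Atom) (hacc : Acceptable S M)
    (hfull : Full S M) (w : M.World) (g : S.Intervention) (X : S.endo)
    (x x' : S.range X) (hne : x ≠ x') :
    satBasic S M w g X x → ¬ satBasic S M w g X x' := by
  intro hx hx'
  obtain ⟨m, hm⟩ := M.closest_nonempty (hfull.exists_inW_intAnte w g)
  exact hne (hacc.eq_of_val (hx m hm) (hx' m hm))
end

section
/- Axiom scheme C5 (Reversibility), ([X⃗←x⃗; W←w'](Y = y) ∧ [X⃗←x⃗; Y←y](W = w')) → [X⃗←x⃗](Y = y), is not valid with respect to M_f^+(Φ_S): for the signature S with endogenous variables V = {X1, X2, X3}, each with range {0, 1}, there exist a counterfactual structure M ∈ M_f^+(Φ_S) and a world w of M such that (M, w) ⊨ [X1←1; X2←1](X3 = 1) ∧ [X1←1; X3←1](X2 = 1) ∧ [X1←1](X2 = 0), so that [X1←1](X3 = 1) fails at w and (M, w) falsifies the instance ([X1←1; X2←1](X3 = 1) ∧ [X1←1; X3←1](X2 = 1)) → [X1←1](X3 = 1) of C5, obtained with X⃗ = (X1),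 x⃗ = (1), W = X2, Y = X3, w' = 1, y = 1. -/
/-! ### Auxiliary construction for stmt4 -/

namespace Stmt4Aux

abbrev Wd := Fin 3 → Fin 2

def idx (a : Wd) : ℕ :=
  if a = ![1,0,0] then 0 else if a = ![1,1,1] then 1
  else 2 + (a 0).val + 2 * (a 1).val + 4 * (a 2).val

lemma idx_inj : Function.Injective idx := by decide

def w0 : Wd := ![0,0,0]

def Rr (w u v : Wd) : Prop := u = w ∨ (v ≠ w ∧ idx u ≤ idx v)

def M0 : CStruct (Σ X : Fin 3, Fin 2) where
  World := Wd
  worldFin := inferInstance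
  val := fun a p => a p.1 = p.2
  R := Rr
  self_mem := fun w => ⟨w, Or.inl rfl⟩
  refl_on := by
    intro w u _
    by_cases h : u = w
    · exact Or.inl h
    · exact Or.inr ⟨h, le_refl _⟩
  trans_on := by
    intro w u v x _ _ _ huv hvx
    rcases huv with h | ⟨hv, huv⟩
    · exact Or.inl h
    · rcases hvx with h | ⟨hx, hvx⟩
      · exact absurd h hv
      · exact Or.inr ⟨hx, le_trans huv hvx⟩
  centered := by
    intro w u h
    refine ⟨Or.inl rfl, ?_⟩
    rintro (h' | ⟨h', _⟩)
    · exact h h'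
    · exact h' rfl

lemma M0_total : M0.totalOrd := by
  intro w u v _ _ hne
  by_cases hu : u = w
  · subst hu
    left
    refine ⟨Or.inl rfl, ?_⟩
    rintro (h | ⟨h, _⟩)
    · exact hne h.symm
    · exact h rfl
  · by_cases hv : v = w
    · subst hv
      right
      refine ⟨Or.inl rfl, ?_⟩
      rintro (h | ⟨h, _⟩)
      · exact hne h
      · exact h rfl
    · have hidx : idx u ≠ idx v := fun h => hne (idx_inj h)
      rcases lt_or_gt_of_ne hidx with h | h
      · left
        refine ⟨Or.inr ⟨hv, le_of_lt h⟩, ?_⟩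
        rintro (h' | ⟨_, h'⟩)
        · exact hv h'
        · exact absurd h (not_lt.2 h')
      · right
        refine ⟨Or.inr ⟨hu, le_of_lt h⟩, ?_⟩
        rintro (h' | ⟨_, h'⟩)
        · exact hu h'
        · exact absurd h (not_lt.2 h')

lemma M0_inW : ∀ w u : Wd, M0.inW w u := by
  intro w u
  by_cases h : u = w
  · exact ⟨u, Or.inl h⟩
  · exact ⟨u, Or.inr ⟨h, le_refl _⟩⟩

/-- If `t` satisfies `A`, everything satisfying `A` avoids `w0` and has
`idx` at least `idx t`, then any closest-to-`w0` `A`-world equals `t`. -/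
lemma closest_unique (A : Wd → Prop) (t : Wd) (hAt : A t)
    (hne : ∀ v, A v → v ≠ w0) (hmin : ∀ v, A v → idx t ≤ idx v) :
    ∀ v ∈ M0.closest w0 A, v = t := by
  rintro v ⟨_, hAv, hcl⟩
  have h1 := hcl t hAt
  have h2 : M0.R w0 t v := Or.inr ⟨hne v hAv, hmin v hAv⟩
  have h3 : M0.R w0 v t := by
    by_contra h
    exact h1 ⟨h2, h⟩
  rcases h3 with h | ⟨_, h⟩
  · exact absurd h (hne v hAv)
  · exact idx_inj (le_antisymm h (hmin v hAv))

/-- A concrete instantiation of the signature, with empty exogenous part. -/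
abbrev SE : Signature :=
  S3 Empty inferInstance (fun e => e.elim) (fun e => e.elim) (fun e => e.elim)

lemma sat_gII01 : satBasic SE M0 w0 (gII 0 1) 2 1 := by
  intro v hv
  have hv' := closest_unique _ ![1,1,1]
    (show ∀ (Y : Fin 3) (y : Fin 2), (gII 0 1 : SE.Intervention) Y = some y → (![1,1,1] : Wd) Y = y
      by decide)
    (show ∀ v : Wd, (∀ (Y : Fin 3) (y : Fin 2), (gII 0 1 : SE.Intervention) Y = some y → v Y = y) →
        v ≠ w0 by decide)
    (show ∀ v : Wd, (∀ (Y : Fin 3) (y : Fin 2), (gII 0 1 : SE.Intervention) Y = some y → v Y = y) →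
        idx ![1,1,1] ≤ idx v by decide) v hv
  subst hv'
  rfl

lemma sat_gII02 : satBasic SE M0 w0 (gII 0 2) 1 1 := by
  intro v hv
  have hv' := closest_unique _ ![1,1,1]
    (show ∀ (Y : Fin 3) (y : Fin 2), (gII 0 2 : SE.Intervention) Y = some y → (![1,1,1] : Wd) Y = y
      by decide)
    (show ∀ v : Wd, (∀ (Y : Fin 3) (y : Fin 2), (gII 0 2 : SE.Intervention) Y = some y → v Y = y) →
        v ≠ w0 by decide)
    (show ∀ v : Wd, (∀ (Y : Fin 3) (y : Fin 2), (gII 0 2 : SE.Intervention) Y = some y → v Y = y) →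
        idx ![1,1,1] ≤ idx v by decide) v hv
  subst hv'
  rfl

lemma sat_gI0_20 : satBasic SE M0 w0 (gI 0) 1 0 := by
  intro v hv
  have hv' := closest_unique _ ![1,0,0]
    (show ∀ (Y : Fin 3) (y : Fin 2), (gI 0 : SE.Intervention) Y = some y → (![1,0,0] : Wd) Y = y
      by decide)
    (show ∀ v : Wd, (∀ (Y : Fin 3) (y : Fin 2), (gI 0 : SE.Intervention) Y = some y → v Y = y) →
        v ≠ w0 by decide)
    (show ∀ v : Wd, (∀ (Y : Fin 3) (y : Fin 2), (gI 0 : SE.Intervention) Y = some y → v Y = y) →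
        idx ![1,0,0] ≤ idx v by decide) v hv
  subst hv'
  rfl

lemma not_sat_gI0_21 : ¬ satBasic SE M0 w0 (gI 0) 2 1 := by
  intro hsat
  have hne : ∀ v : Wd, (∀ (Y : Fin 3) (y : Fin 2), (gI 0 : SE.Intervention) Y = some y → v Y = y) →
      v ≠ w0 := by decide
  have hmin : ∀ v : Wd, (∀ (Y : Fin 3) (y : Fin 2), (gI 0 : SE.Intervention) Y = some y → v Y = y) →
      idx ![1,0,0] ≤ idx v := by decide
  have hmem : (![1,0,0] : Wd) ∈ M0.closest w0 (intAnte SE M0 (gI 0)) := by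
    refine ⟨M0_inW _ _,
      (show ∀ (Y : Fin 3) (y : Fin 2), (gI 0 : SE.Intervention) Y = some y → (![1,0,0] : Wd) Y = y
        by decide), ?_⟩
    intro v' hv' hlt
    have hne' : v' ≠ w0 := hne v' hv'
    rcases hlt.1 with h | ⟨_, h⟩
    · exact hne' h
    · have hv'eq : v' = ![1,0,0] := idx_inj (le_antisymm h (hmin v' hv'))
      subst hv'eq
      exact hlt.2 (Or.inr ⟨hne', le_refl _⟩)
  have h1 : (![1,0,0] : Wd) 2 = (1 : Fin 2) := hsat _ hmem
  exact absurd h1 (by decide)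

end Stmt4Aux

/-- C5 (Reversibility) is not valid with respect to `M_f⁺(Φ_S)`:
over the signature with `V = {X1, X2, X3}`, each with range `{0, 1}`, there are
a full acceptable totally-ordered counterfactual structure `M` and a world `w`
with `(M,w) ⊨ [X1←1; X2←1](X3 = 1) ∧ [X1←1; X3←1](X2 = 1) ∧ [X1←1](X2 = 0)`,
and moreover `(M,w) ⊭ [X1←1](X3 = 1)`, falsifying the corresponding instance
of C5. -/
theorem stmt4 (E : Type) (eF : Fintype E) (er : E → Type)
    (erF : ∀ e, Fintype (er e)) (erN : ∀ e, Nonempty (er e)) :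
    ∃ (M : CStruct (S3 E eF er erF erN).Atom) (w : M.World),
      Acceptable (S3 E eF er erF erN) M ∧ Full (S3 E eF er erF erN) M ∧
      M.totalOrd ∧
      satBasic (S3 E eF er erF erN) M w (gII 0 1) 2 1 ∧
      satBasic (S3 E eF er erF erN) M w (gII 0 2) 1 1 ∧
      satBasic (S3 E eF er erF erN) M w (gI 0) 1 0 ∧
      ¬ satBasic (S3 E eF er erF erN) M w (gI 0) 2 1 := by
  refine ⟨Stmt4Aux.M0, Stmt4Aux.w0, ?_, ?_, Stmt4Aux.M0_total, ?_, ?_, ?_, ?_⟩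
  · intro w X
    exact ⟨w X, rfl, fun y h => h.symm⟩
  · intro w a
    exact ⟨a, Stmt4Aux.M0_inW w a, fun X => rfl⟩
  · exact Stmt4Aux.sat_gII01
  · exact Stmt4Aux.sat_gII02
  · exact Stmt4Aux.sat_gI0_20
  · exact Stmt4Aux.not_sat_gI0_21
end

section
/- For every recursive causal model T ∈ Trec(S) there exist a recursive counterfactual structure M ∈ Mrec(Φ_S) and, for each context u⃗, a world w_{u⃗} of M, such that for all formulas φ ∈ Lprop(S): (T, u⃗) ⊨ φ if and only if (M, w_{u⃗}) ⊨ φ. -/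
/-! Worlds are pairs `(u, a)` of a context and an assignment. The world `(u, a)` is governed by
`T` if `a` is the actual outcome of `T` in `u`, and by the constant model `a` otherwise; around it,
worlds with another context come last and the others are ordered by their violation sets (the
variables whose equation fails), compared lexicographically along the causal order. In a
recursive model the solution of `T_{Y⃗←y⃗}` is then the strictly closest world satisfying
`Y⃗ = y⃗`: at the first variable where another such assignment differs from the solution, that
assignment violates the equation while the two agree on everything before. The recursiveness of
the structure holds because an intervention on `Y` does not change the solution before `Y`. -/

namespace CStruct

variable {Φ W K : Type} [Finite W] [LinearOrder K]

noncomputable def ofRank (val : W → Φ → Prop) (key : W → W → K)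
    (hkey : ∀ w v, v ≠ w → key w w < key w v) : CStruct Φ where
  World := W
  worldFin := Fintype.ofFinite W
  val := val
  R w u v := key w u ≤ key w v
  self_mem w := ⟨w, le_rfl⟩
  refl_on _ _ _ := le_rfl
  trans_on _ _ _ _ _ _ _ := le_trans
  centered w u hu := ⟨(hkey w u hu).le, (hkey w u hu).not_ge⟩

variable {val : W → Φ → Prop} {key : W → W → K}
  {hkey : ∀ w v, v ≠ w → key w w < key w v}

lemma inW_ofRank (w v : W) : (ofRank val key hkey).inW w v := ⟨v, le_refl (key w v)⟩

lemma totalOrd_ofRank (hinj : ∀ w, Function.Injective (key w)) :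
    (ofRank val key hkey).totalOrd := by
  intro w u v _ _ huv
  rcases lt_or_gt_of_ne ((hinj w).ne huv) with h | h
  exacts [.inl ⟨h.le, h.not_ge⟩, .inr ⟨h.le, h.not_ge⟩]

lemma cfSat_ofRank_iff {w v₀ : W} {A B : W → Prop} (hA : A v₀)
    (hmin : ∀ v, A v → v ≠ v₀ → key w v₀ < key w v) :
    (ofRank val key hkey).cfSat w A B ↔ B v₀ := by
  have hclosest : (ofRank val key hkey).closest w A = {v₀} := by
    ext v
    refine ⟨fun ⟨_, hAv, hv⟩ => by_contra fun hne => ?_, ?_⟩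
    · exact hv v₀ hA ⟨(hmin v hAv hne).le, (hmin v hAv hne).not_ge⟩
    · rintro rfl
      refine ⟨inW_ofRank w v, hA, fun v' hAv' hlt => ?_⟩
      rcases eq_or_ne v' v with rfl | hne
      exacts [hlt.2 hlt.1, hlt.2 (hmin v' hAv' hne).le]
  unfold cfSat
  rw [hclosest]
  exact ⟨fun h => h v₀ rfl, fun h v hv => hv ▸ h⟩

end CStruct

section NumAbove

variable {α : Type} [Fintype α] {r : α → α → Prop}

noncomputable def numAbove (r : α → α → Prop) (x : α) : ℕ :=
  open Classical in (Finset.univ.filter (r x)).card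

lemma numAbove_lt_numAbove [IsTrans α r] [Std.Irrefl r] {x y : α} (h : r x y) :
    numAbove r y < numAbove r x := by
  classical
  refine Finset.card_lt_card ⟨fun z hz => ?_, fun hsub => ?_⟩
  · simp only [Finset.mem_filter, Finset.mem_univ, true_and] at hz ⊢
    exact _root_.trans h hz
  · exact irrefl_of r y (by simpa using hsub (by simpa using h))

lemma numAbove_injective [IsStrictTotalOrder α r] : Function.Injective (numAbove r) := by
  intro x y hxy
  rcases trichotomous_of r x y with h | h | h
  · exact absurd hxy (numAbove_lt_numAbove h).ne'
  · exact h
  · exact absurd hxy (numAbove_lt_numAbove h).ne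

end NumAbove

def Signature.Respects {S : Signature} (g : S.Intervention) (a : S.Asgn) : Prop :=
  ∀ (X : S.endo) (x : S.range X), g X = some x → a X = x

namespace CausalModel

variable {S : Signature} {T : CausalModel S} {r : S.endo → S.endo → Prop}

def RecursiveWrt (T : CausalModel S) (r : S.endo → S.endo → Prop) : Prop :=
  ∀ X Y : S.endo, r X Y →
    ∀ (u : S.Ctx) (a a' : ∀ Z : {Z : S.endo // Z ≠ X}, S.range Z.1),
      (∀ Z : {Z : S.endo // Z ≠ X}, Z.1 ≠ Y → a Z = a' Z) →
      T.F X u a = T.F X u a'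

lemma isSolution.respects {g : S.Intervention} {u : S.Ctx} {a : S.Asgn}
    (h : T.isSolution g u a) : S.Respects g a :=
  fun X x hx => (h X).1 x hx

def const (a : S.Asgn) : CausalModel S := ⟨fun X _ _ => a X⟩

lemma recursiveWrt_const (a : S.Asgn) : (const a).RecursiveWrt r :=
  fun _ _ _ _ _ _ _ => rfl

lemma isSolution_const (u : S.Ctx) (a : S.Asgn) :
    (const a).isSolution (fun _ => none) u a :=
  fun _ => ⟨fun _ h => (nomatch h), fun _ => rfl⟩

open Classical in
/-- Non-actual worlds get the constant model, so that every world is the actual outcome of its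
own model. -/
noncomputable def modelAt (T : CausalModel S) (w : S.Ctx × S.Asgn) : CausalModel S :=
  if T.isSolution (fun _ => none) w.1 w.2 then T else const w.2

lemma modelAt_of_isSolution {u : S.Ctx} {a : S.Asgn} (h : T.isSolution (fun _ => none) u a) :
    T.modelAt (u, a) = T :=
  if_pos h

lemma isSolution_modelAt (w : S.Ctx × S.Asgn) :
    (T.modelAt w).isSolution (fun _ => none) w.1 w.2 := by
  unfold modelAt
  split_ifs with h
  exacts [h, isSolution_const w.1 w.2]

lemma RecursiveWrt.modelAt (hT : T.RecursiveWrt r) (w : S.Ctx × S.Asgn) :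
    (T.modelAt w).RecursiveWrt r := by
  unfold CausalModel.modelAt
  split_ifs
  exacts [hT, recursiveWrt_const w.2]

open Classical in
noncomputable def violations (T : CausalModel S) (u : S.Ctx) (a : S.Asgn) : Finset S.endo :=
  Finset.univ.filter fun X => a X ≠ T.F X u fun Y => a Y.1

lemma mem_violations {u : S.Ctx} {a : S.Asgn} {X : S.endo} :
    X ∈ T.violations u a ↔ a X ≠ T.F X u fun Y => a Y.1 := by
  simp [violations]

/-- Since `numAbove r` reverses `r`, colex compares violation sets by the `r`-least variable
in their symmetric difference. -/
noncomputable def violationRank (r : S.endo → S.endo → Prop) (T : CausalModel S) (u : S.Ctx)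
    (a : S.Asgn) : Colex (Finset ℕ) :=
  toColex ((T.violations u a).image (numAbove r))

open Classical in
noncomputable def worldKey (r : S.endo → S.endo → Prop) (T : CausalModel S)
    (w v : S.Ctx × S.Asgn) : WithTop (Colex (Finset ℕ)) ×ₗ ℕ :=
  toLex (if v.1 = w.1 then (violationRank r (T.modelAt w) w.1 v.2 : WithTop _) else ⊤,
    (Finite.equivFin (S.Ctx × S.Asgn) v : ℕ))

lemma worldKey_injective (w : S.Ctx × S.Asgn) : Function.Injective (worldKey r T w) := by
  intro v v' h
  have := congrArg (fun k => (ofLex k).2) h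
  exact (Finite.equivFin _).injective (Fin.val_injective this)

variable [IsStrictTotalOrder S.endo r]

namespace RecursiveWrt

lemma F_congr (hT : T.RecursiveWrt r) {X : S.endo} {u : S.Ctx}
    {a a' : ∀ Z : {Z : S.endo // Z ≠ X}, S.range Z.1}
    (h : ∀ Z : {Z : S.endo // Z ≠ X}, r Z.1 X → a Z = a' Z) :
    T.F X u a = T.F X u a' := by
  classical
  suffices key : ∀ (s : Finset {Z : S.endo // Z ≠ X})
      (a : ∀ Z : {Z : S.endo // Z ≠ X}, S.range Z.1),
      (∀ Z ∉ s, a Z = a' Z) → (∀ Z ∈ s, r X Z.1) → T.F X u a = T.F X u a' by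
    refine key {Z | ¬ r Z.1 X} a (fun Z hZ => h Z (by simpa using hZ)) fun Z hZ => ?_
    have hZX : ¬ r Z.1 X := by simpa using hZ
    exact (trichotomous_of r Z.1 X).resolve_left hZX |>.resolve_left Z.2
  intro s
  induction s using Finset.induction_on with
  | empty => exact fun a ha _ => congrArg _ (funext fun Z => ha Z (Finset.notMem_empty Z))
  | insert Y s hYs ih =>
    intro a ha hlt
    calc T.F X u a = T.F X u (Function.update a Y (a' Y)) :=
          hT X Y.1 (hlt Y (s.mem_insert_self Y)) u _ _ fun Z hZ =>
            (Function.update_of_ne (Subtype.coe_ne_coe.mp hZ) _ _).symm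
      _ = T.F X u a' := by
          refine ih _ (fun Z hZ => ?_) fun Z hZ => hlt Z (Finset.mem_insert_of_mem hZ)
          rcases eq_or_ne Z Y with rfl | hZY
          · exact Function.update_self ..
          · rw [Function.update_of_ne hZY]
            exact ha Z (by simp [hZY, hZ])

lemma exists_isSolution (hT : T.RecursiveWrt r) (g : S.Intervention) (u : S.Ctx) :
    ∃ s, T.isSolution g u s := by
  classical
  have hwf : WellFounded r := Finite.wellFounded_of_trans_of_irrefl r
  let s : S.Asgn := hwf.fix fun X IH => (g X).elim
    (T.F X u fun Y => if h : r Y.1 X then IH Y.1 h else Classical.arbitrary _) id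
  have hs : ∀ X, s X = (g X).elim
      (T.F X u fun Y => if h : r Y.1 X then s Y.1 else Classical.arbitrary _) id :=
    hwf.fix_eq _
  refine ⟨s, fun X => ⟨fun x hx => by rw [hs, hx]; rfl, fun hx => ?_⟩⟩
  rw [hs, hx]
  exact hT.F_congr fun Z hZ => dif_pos hZ

lemma isSolution_update_apply (hT : T.RecursiveWrt r) {g : S.Intervention} {u : S.Ctx}
    {Y : S.endo} {y : S.range Y} {s s' : S.Asgn} (hs : T.isSolution g u s)
    (hs' : T.isSolution (Function.update g Y (some y)) u s') {X : S.endo} (hXY : r X Y) :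
    s' X = s X := by
  have hwf : WellFounded r := Finite.wellFounded_of_trans_of_irrefl r
  induction X using hwf.induction with
  | _ X IH =>
  have hg : Function.update g Y (some y) X = g X :=
    Function.update_of_ne (ne_of_irrefl hXY) _ _
  cases hgX : g X with
  | some x => rw [(hs' X).1 x (hg.trans hgX), (hs X).1 x hgX]
  | none =>
    rw [(hs' X).2 (hg.trans hgX), (hs X).2 hgX]
    exact hT.F_congr fun Z hZ => IH Z.1 hZ (_root_.trans hZ hXY)

lemma violationRank_lt (hT : T.RecursiveWrt r) {g : S.Intervention} {u : S.Ctx}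
    {s b : S.Asgn} (hs : T.isSolution g u s) (hb : S.Respects g b) (hne : b ≠ s) :
    violationRank r T u s < violationRank r T u b := by
  have hwf : WellFounded r := Finite.wellFounded_of_trans_of_irrefl r
  obtain ⟨X₀, hX₀ : s X₀ ≠ b X₀, hmin⟩ :=
    hwf.has_min {X | s X ≠ b X} (Function.ne_iff.mp (Ne.symm hne))
  have hbelow : ∀ Z, r Z X₀ → s Z = b Z := fun Z hZ => by_contra fun h => hmin Z h hZ
  have hF : ∀ {Z}, r Z X₀ ∨ Z = X₀ →
      (T.F Z u fun Y => s Y.1) = T.F Z u fun Y => b Y.1 := by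
    rintro Z hZ
    refine hT.F_congr fun W hW => hbelow W.1 ?_
    rcases hZ with hZ | rfl
    exacts [_root_.trans hW hZ, hW]
  have hgX₀ : g X₀ = none := by
    cases hg : g X₀ with
    | none => rfl
    | some x => exact absurd (((hs X₀).1 x hg).trans (hb X₀ x hg).symm) hX₀
  have hsX₀ : X₀ ∉ T.violations u s := by
    simpa [mem_violations] using (hs X₀).2 hgX₀
  have hbX₀ : X₀ ∈ T.violations u b := by
    rw [mem_violations, ← hF (Or.inr rfl), ← (hs X₀).2 hgX₀]
    exact Ne.symm hX₀
  have hsame : ∀ Z, r Z X₀ → (Z ∈ T.violations u s ↔ Z ∈ T.violations u b) := by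
    intro Z hZ
    rw [mem_violations, mem_violations, hF (Or.inl hZ), hbelow Z hZ]
  rw [violationRank, violationRank, Finset.Colex.toColex_lt_toColex_iff_exists_forall_lt]
  refine ⟨numAbove r X₀, Finset.mem_image_of_mem _ hbX₀,
    by rwa [numAbove_injective.mem_finset_image], ?_⟩
  rintro _ hc hZb
  obtain ⟨Z, hZs, rfl⟩ := Finset.mem_image.mp hc
  rw [numAbove_injective.mem_finset_image] at hZb
  apply numAbove_lt_numAbove
  rcases trichotomous_of r Z X₀ with h | rfl | h
  · exact absurd ((hsame Z h).mp hZs) hZb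
  · exact absurd hZs hsX₀
  · exact h

lemma isSolution_unique (hT : T.RecursiveWrt r) {g : S.Intervention} {u : S.Ctx}
    {s s' : S.Asgn} (hs : T.isSolution g u s) (hs' : T.isSolution g u s') : s' = s := by
  by_contra hne
  exact lt_asymm (hT.violationRank_lt hs hs'.respects hne)
    (hT.violationRank_lt hs' hs.respects (Ne.symm hne))

lemma sat_basic_iff (hT : T.RecursiveWrt r) {g : S.Intervention} {u : S.Ctx} {s : S.Asgn}
    (hs : T.isSolution g u s) {X : S.endo} {x : S.range X} :
    T.sat u (.basic g X x) ↔ s X = x :=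
  ⟨fun h => h s hs, fun h _ hs' => hT.isSolution_unique hs hs' ▸ h⟩

end RecursiveWrt

lemma worldKey_lt (hT : T.RecursiveWrt r) {w v : S.Ctx × S.Asgn} {g : S.Intervention}
    {s : S.Asgn} (hs : (T.modelAt w).isSolution g w.1 s) (hv : S.Respects g v.2)
    (hne : v ≠ (w.1, s)) : worldKey r T w (w.1, s) < worldKey r T w v := by
  refine Prod.Lex.toLex_lt_toLex.mpr (.inl ?_)
  dsimp only
  rw [if_pos rfl]
  split_ifs with h
  · exact WithTop.coe_lt_coe.mpr
      ((hT.modelAt w).violationRank_lt hs hv fun e => hne (Prod.ext h e))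
  · exact WithTop.coe_lt_top _

namespace RecursiveWrt

noncomputable def toCStruct (hT : T.RecursiveWrt r) : CStruct S.Atom :=
  CStruct.ofRank (fun v p => v.2 p.1 = p.2) (worldKey r T) fun w _ hv =>
    worldKey_lt hT (isSolution_modelAt w) (fun _ _ h => (nomatch h)) hv

lemma satBasic_toCStruct_iff (hT : T.RecursiveWrt r) {w : S.Ctx × S.Asgn}
    {g : S.Intervention} {s : S.Asgn} (hs : (T.modelAt w).isSolution g w.1 s)
    {X : S.endo} {x : S.range X} :
    satBasic S hT.toCStruct w g X x ↔ s X = x :=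
  CStruct.cfSat_ofRank_iff (v₀ := (w.1, s)) hs.respects fun _ hv hne => worldKey_lt hT hs hv hne

lemma mRec_toCStruct (hT : T.RecursiveWrt r) : MRec S hT.toCStruct := by
  refine ⟨fun w X => ⟨w.2 X, rfl, fun _ h => h.symm⟩,
    fun w a => ⟨(w.1, a), CStruct.inW_ofRank _ _, fun _ => rfl⟩,
    CStruct.totalOrd_ofRank worldKey_injective, fun w => ⟨r, ‹_›, ?_⟩⟩
  intro W' Y hWY g _ _ y w'
  obtain ⟨s, hs⟩ := (hT.modelAt w).exists_isSolution g w.1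
  obtain ⟨s', hs'⟩ := (hT.modelAt w).exists_isSolution (Function.update g Y (some y)) w.1
  rw [hT.satBasic_toCStruct_iff hs', hT.satBasic_toCStruct_iff hs,
    (hT.modelAt w).isSolution_update_apply hs hs' hWY]

lemma sat_iff_satL_toCStruct (hT : T.RecursiveWrt r) {u : S.Ctx} {a : S.Asgn}
    (ha : T.isSolution (fun _ => none) u a) (φ : LProp S) :
    T.sat u φ ↔ satL hT.toCStruct (u, a) φ := by
  induction φ with
  | basic g X x =>
    obtain ⟨s, hs⟩ := hT.exists_isSolution g u
    have hs' : (T.modelAt (u, a)).isSolution g u s := by rwa [modelAt_of_isSolution ha]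
    exact (hT.sat_basic_iff hs).trans (hT.satBasic_toCStruct_iff hs').symm
  | neg φ ih => exact not_congr ih
  | and φ ψ ih₁ ih₂ => exact and_congr ih₁ ih₂

end RecursiveWrt

end CausalModel

/-- For every recursive causal model `T ∈ Trec(S)` there are a
recursive counterfactual structure `M ∈ Mrec(Φ_S)` and, for each context `u⃗`,
a world `w_{u⃗}` of `M` such that for all `φ ∈ Lprop(S)`:
`(T, u⃗) ⊨ φ` iff `(M, w_{u⃗}) ⊨ φ`. -/
theorem stmt7 (S : Signature) (T : CausalModel S) (hT : T.Recursive) :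
    ∃ M : CStruct S.Atom, MRec S M ∧ ∃ wOf : S.Ctx → M.World,
      ∀ (u : S.Ctx) (φ : LProp S), T.sat u φ ↔ satL M (wOf u) φ := by
  obtain ⟨r, _, hT : T.RecursiveWrt r⟩ := hT
  choose actual hactual using fun u => hT.exists_isSolution (fun _ => none) u
  exact ⟨hT.toCStruct, hT.mRec_toCStruct, fun u => (u, actual u),
    fun u => hT.sat_iff_satL_toCStruct (hactual u)⟩
end
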